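/- arXiv:1505.08126 — 2 statements merged into one kernel-verified Lean document; each statement's English description precedes it below -/
import Mathlib

section
/- Let A be an n×n Hermitian matrix with ‖A‖ ≤ 1, and suppose w is a unit vector with ‖w - v‖ ≤ δ for some unit eigenvector v of A, where δ ≤ 1/4. Let z = A·w, let i₀ = argmax_{i∈[n]} |w_i|, and set c = z_{i₀} / w_{i₀}. Then ‖A·w - c·w‖ ≤ 3δ√n. -/
/-!
With `r = A w - λ w` the eigen-equation gives `‖r‖ ≤ 2δ`, and `A w - c w = r - (r i₀ / w i₀) w`.
The map `r ↦ r - (r i₀ / w i₀) w` is an oblique projection of norm at most `‖w‖ / |w i₀|`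
(Cauchy–Schwarz on the split of `r` and `w` into their `i₀`-th coordinate and the rest), and
`‖w‖ / |w i₀| ≤ √n` because `i₀` is a largest coordinate of `w`.
-/

section

variable {𝕜 E : Type*} [RCLike 𝕜] [NormedAddCommGroup E] [NormedSpace 𝕜 E]

theorem ContinuousLinearMap.norm_le_opNorm_of_apply_eq_smul {A : E →L[𝕜] E} {v : E} {μ : 𝕜}
    (hv : v ≠ 0) (hAv : A v = μ • v) : ‖μ‖ ≤ ‖A‖ := by
  have := A.le_opNorm v
  rw [hAv, norm_smul] at this
  exact le_of_mul_le_mul_right this (norm_pos_iff.mpr hv)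

theorem ContinuousLinearMap.norm_apply_sub_smul_le_of_apply_eq_smul {A : E →L[𝕜] E} {v : E}
    {μ : 𝕜} (hv : v ≠ 0) (hAv : A v = μ • v) (w : E) :
    ‖A w - μ • w‖ ≤ 2 * ‖A‖ * ‖w - v‖ := by
  have hμ := A.norm_le_opNorm_of_apply_eq_smul hv hAv
  calc ‖A w - μ • w‖ = ‖A (w - v) - μ • (w - v)‖ := by
        rw [map_sub, hAv, smul_sub, sub_sub_sub_cancel_right]
    _ ≤ ‖A‖ * ‖w - v‖ + ‖μ‖ * ‖w - v‖ :=
        (norm_sub_le _ _).trans (add_le_add (A.le_opNorm _) (norm_smul _ _).le)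
    _ ≤ 2 * ‖A‖ * ‖w - v‖ := by nlinarith [norm_nonneg (w - v)]

end

theorem mul_add_mul_le_sqrt_mul_sqrt (a b c d : ℝ) :
    a * b + c * d ≤ √(a ^ 2 + c ^ 2) * √(b ^ 2 + d ^ 2) := by
  rw [← Real.sqrt_mul (by positivity)]
  apply Real.le_sqrt_of_sq_le
  nlinarith [sq_nonneg (a * d - b * c)]

namespace EuclideanSpace

variable {𝕜 ι : Type*} [RCLike 𝕜] [Fintype ι]

theorem norm_le_sqrt_card_mul {w : EuclideanSpace 𝕜 ι} {i₀ : ι} (hmax : ∀ i, ‖w i‖ ≤ ‖w i₀‖) :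
    ‖w‖ ≤ √(Fintype.card ι) * ‖w i₀‖ := by
  rw [norm_eq, ← Real.sqrt_sq (norm_nonneg (w i₀)), ← Real.sqrt_mul (by positivity)]
  gcongr
  calc ∑ i, ‖w i‖ ^ 2 ≤ ∑ _i : ι, ‖w i₀‖ ^ 2 :=
        Finset.sum_le_sum fun i _ => pow_le_pow_left₀ (norm_nonneg _) (hmax i) 2
    _ = Fintype.card ι * ‖w i₀‖ ^ 2 := by simp

variable [DecidableEq ι]

theorem norm_sq_eq_norm_sq_sub_single_add (v : EuclideanSpace 𝕜 ι) (i : ι) :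
    ‖v‖ ^ 2 = ‖v - single i (v i)‖ ^ 2 + ‖v i‖ ^ 2 := by
  have h : inner 𝕜 (v - single i (v i)) (single i (v i)) = 0 := by
    simp [inner_single_right]
  simpa [sq] using norm_add_sq_eq_norm_sq_add_norm_sq_of_inner_eq_zero _ _ h

theorem norm_sub_div_smul_le (r w : EuclideanSpace 𝕜 ι) {i₀ : ι} (hw : w i₀ ≠ 0) :
    ‖r - (r i₀ / w i₀) • w‖ ≤ ‖r‖ * ‖w‖ / ‖w i₀‖ := by
  set r' := r - single i₀ (r i₀)
  set w' := w - single i₀ (w i₀)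
  have hsplit : r - (r i₀ / w i₀) • w = r' - (r i₀ / w i₀) • w' := by
    ext i
    rcases eq_or_ne i i₀ with rfl | hi
    · simp [r', w', hw]
    · simp [r', w', hi]
  rw [le_div_iff₀ (norm_pos_iff.mpr hw), hsplit]
  calc ‖r' - (r i₀ / w i₀) • w'‖ * ‖w i₀‖
      ≤ (‖r'‖ + ‖r i₀‖ / ‖w i₀‖ * ‖w'‖) * ‖w i₀‖ := by
        gcongr
        exact (norm_sub_le _ _).trans_eq (by rw [norm_smul, norm_div])
    _ = ‖r'‖ * ‖w i₀‖ + ‖r i₀‖ * ‖w'‖ := by field_simp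
    _ ≤ √(‖r'‖ ^ 2 + ‖r i₀‖ ^ 2) * √(‖w i₀‖ ^ 2 + ‖w'‖ ^ 2) := mul_add_mul_le_sqrt_mul_sqrt ..
    _ = ‖r‖ * ‖w‖ := by
        rw [add_comm (‖w i₀‖ ^ 2), ← r.norm_sq_eq_norm_sq_sub_single_add,
          ← w.norm_sq_eq_norm_sq_sub_single_add, Real.sqrt_sq (norm_nonneg _),
          Real.sqrt_sq (norm_nonneg _)]

end EuclideanSpace

theorem approx_eigvec_rayleigh_general (n : ℕ)
    (A : EuclideanSpace ℂ (Fin n) →L[ℂ] EuclideanSpace ℂ (Fin n))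
    (hAnorm : ‖A‖ ≤ 1)
    (w v : EuclideanSpace ℂ (Fin n)) (hw : ‖w‖ = 1) (hv : ‖v‖ = 1)
    (lam : ℝ) (heig : A v = (lam : ℂ) • v)
    (δ : ℝ) (hclose : ‖w - v‖ ≤ δ)
    (i₀ : Fin n) (hmax : ∀ i, ‖w i‖ ≤ ‖w i₀‖)
    (c : ℂ) (hc : c = A w i₀ / w i₀) :
    ‖A w - c • w‖ ≤ 3 * δ * Real.sqrt n := by
  have hw_le : 1 ≤ √n * ‖w i₀‖ := by
    simpa [hw] using EuclideanSpace.norm_le_sqrt_card_mul hmax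
  have hw₀ : w i₀ ≠ 0 := by
    rintro h
    rw [h, norm_zero, mul_zero] at hw_le
    linarith
  set r := A w - (lam : ℂ) • w
  have hr : ‖r‖ ≤ 2 * δ :=
    calc ‖r‖ ≤ 2 * ‖A‖ * ‖w - v‖ :=
          A.norm_apply_sub_smul_le_of_apply_eq_smul (norm_ne_zero_iff.mp (hv ▸ one_ne_zero)) heig w
      _ ≤ 2 * 1 * δ := by gcongr
      _ = 2 * δ := by ring
  have hresidual : A w - c • w = r - (r i₀ / w i₀) • w := by
    rw [hc, show r i₀ / w i₀ = A w i₀ / w i₀ - lam by simp [r]; field_simp]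
    simp only [r, sub_smul]
    abel
  calc ‖A w - c • w‖ ≤ ‖r‖ * ‖w‖ / ‖w i₀‖ := hresidual ▸ r.norm_sub_div_smul_le w hw₀
    _ ≤ 2 * δ * √n := by
        rw [hw, mul_one, div_le_iff₀ (norm_pos_iff.mpr hw₀)]
        nlinarith [norm_nonneg r]
    _ ≤ 3 * δ * √n := by
        have : 0 ≤ δ := (norm_nonneg _).trans hclose
        gcongr
        norm_num

/-- If a unit vector `w` is `δ`-close (`δ ≤ 1/4`) to a unit eigenvector `v` of a
Hermitian operator `A` with `‖A‖ ≤ 1`, then with `i₀` a coordinate of maximal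
magnitude of `w` and `c = (Aw)_{i₀} / w_{i₀}`, we have `‖Aw - c·w‖ ≤ 3δ√n`. -/
theorem approx_eigvec_rayleigh (n : ℕ) (hn : 0 < n)
    (A : EuclideanSpace ℂ (Fin n) →L[ℂ] EuclideanSpace ℂ (Fin n))
    (hA : IsSelfAdjoint A) (hAnorm : ‖A‖ ≤ 1)
    (w v : EuclideanSpace ℂ (Fin n)) (hw : ‖w‖ = 1) (hv : ‖v‖ = 1)
    (lam : ℝ) (heig : A v = (lam : ℂ) • v)
    (δ : ℝ) (hδpos : 0 < δ) (hδ : δ ≤ 1 / 4) (hclose : ‖w - v‖ ≤ δ)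
    (i₀ : Fin n) (hmax : ∀ i, ‖w i‖ ≤ ‖w i₀‖)
    (c : ℂ) (hc : c = A w i₀ / w i₀) :
    ‖A w - c • w‖ ≤ 3 * δ * Real.sqrt n :=
  approx_eigvec_rayleigh_general n A hAnorm w v hw hv lam heig δ hclose i₀ hmax c hc
end

section
/- Let A be a δ-separated n×n Hermitian matrix with ‖A‖ ≤ 1, and let w be a unit vector and c a complex number with |c| ≤ 1 such that ‖Aw - cw‖ ≤ B where B ≤ δ²/100. Then there exists an eigenvalue λ of A with |c - λ| ≤ δ/10, and there exists a unit eigenvector v of A with eigenvalue λ such that ‖v - w‖ ≤ δ/30. -/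
/-!
Write `uⱼ = ⟪bⱼ, w⟫`. Then `‖Aw - cw‖² = ∑ⱼ |λⱼ - c|² |uⱼ|²`, so the eigenvalue `λᵢ` closest to
`c` satisfies `|c - λᵢ| ≤ B`, and by the gap every other eigenvalue is at distance at least
`δ - B` from `c`; hence `1 - |uᵢ|² ≤ B² / (δ - B)²`. Turning `bᵢ` by the phase of `uᵢ` gives a unit
eigenvector `v` with `‖v - w‖² = 2 - 2|uᵢ| ≤ 2 (1 - |uᵢ|²)`.
-/

open scoped InnerProductSpace

theorem Fin.le_sub_of_lt_of_forall_succ_le_sub {n : ℕ} {f : Fin n → ℝ} {δ : ℝ} (hδ : 0 ≤ δ)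
    (h : ∀ i j : Fin n, (i : ℕ) + 1 = j → f i - f j ≥ δ) {i j : Fin n} (hij : i < j) :
    δ ≤ f i - f j := by
  obtain ⟨j, hj⟩ := j
  induction j with
  | zero => exact absurd (Fin.lt_def.mp hij) (Nat.not_lt_zero _)
  | succ k ih =>
    have hstep := h ⟨k, by omega⟩ ⟨k + 1, hj⟩ rfl
    rcases Nat.lt_succ_iff_lt_or_eq.mp (Fin.lt_def.mp hij) with hik | hik
    · linarith [ih (by omega) (Fin.lt_def.mpr hik)]
    · rwa [show i = ⟨k, by omega⟩ from Fin.ext hik]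

theorem Fin.le_abs_sub_of_ne_of_forall_succ_le_sub {n : ℕ} {f : Fin n → ℝ} {δ : ℝ} (hδ : 0 ≤ δ)
    (h : ∀ i j : Fin n, (i : ℕ) + 1 = j → f i - f j ≥ δ) {i j : Fin n} (hij : i ≠ j) :
    δ ≤ |f i - f j| := by
  rcases hij.lt_or_gt with hlt | hlt
  · exact (Fin.le_sub_of_lt_of_forall_succ_le_sub hδ h hlt).trans (le_abs_self _)
  · rw [abs_sub_comm]
    exact (Fin.le_sub_of_lt_of_forall_succ_le_sub hδ h hlt).trans (le_abs_self _)

variable {𝕜 E ι : Type*} [RCLike 𝕜] [NormedAddCommGroup E] [InnerProductSpace 𝕜 E] [Fintype ι]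

theorem exists_norm_eq_one_norm_smul_sub_sq (e w : E) :
    ∃ z : 𝕜, ‖z‖ = 1 ∧ ‖z • e - w‖ ^ 2 = ‖e‖ ^ 2 + ‖w‖ ^ 2 - 2 * ‖⟪e, w⟫_𝕜‖ := by
  by_cases h0 : ⟪e, w⟫_𝕜 = 0
  · refine ⟨1, norm_one, ?_⟩
    rw [one_smul, @norm_sub_sq 𝕜, h0]
    simp
  · have hpos : 0 < ‖⟪e, w⟫_𝕜‖ := norm_pos_iff.mpr h0
    refine ⟨⟪e, w⟫_𝕜 / (‖⟪e, w⟫_𝕜‖ : 𝕜), ?_, ?_⟩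
    · rw [norm_div, RCLike.norm_ofReal, abs_of_pos hpos, div_self hpos.ne']
    · rw [@norm_sub_sq 𝕜, norm_smul, norm_div, RCLike.norm_ofReal, abs_of_pos hpos,
        div_self hpos.ne', one_mul, inner_smul_left, map_div₀, RCLike.conj_ofReal,
        div_mul_eq_mul_div, RCLike.conj_mul, ← RCLike.ofReal_pow, ← RCLike.ofReal_div,
        RCLike.ofReal_re]
      field_simp
      ring

section Eigenbasis

variable (b : OrthonormalBasis ι 𝕜 E) {A : E →ₗ[𝕜] E} {μ : ι → 𝕜}

theorem OrthonormalBasis.inner_apply_sub_smul (heig : ∀ i, A (b i) = μ i • b i) (c : 𝕜) (w : E)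
    (i : ι) : ⟪b i, A w - c • w⟫_𝕜 = (μ i - c) * ⟪b i, w⟫_𝕜 := by
  have hexp : A w - c • w = ∑ j, ((μ j - c) * ⟪b j, w⟫_𝕜) • b j := by
    conv_lhs => rw [← b.sum_repr' w]
    simp only [map_sum, map_smul, heig, Finset.smul_sum, smul_smul, ← Finset.sum_sub_distrib,
      ← sub_smul, sub_mul, mul_comm]
  rw [hexp, b.orthonormal.inner_right_fintype]

theorem OrthonormalBasis.sq_mul_sum_sq_norm_inner_le (heig : ∀ i, A (b i) = μ i • b i) (c : 𝕜)
    (w : E) {r : ℝ} (hr : 0 ≤ r) (s : Finset ι) (hs : ∀ j ∈ s, r ≤ ‖μ j - c‖) :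
    r ^ 2 * ∑ j ∈ s, ‖⟪b j, w⟫_𝕜‖ ^ 2 ≤ ‖A w - c • w‖ ^ 2 :=
  calc r ^ 2 * ∑ j ∈ s, ‖⟪b j, w⟫_𝕜‖ ^ 2
      ≤ ∑ j ∈ s, ‖⟪b j, A w - c • w⟫_𝕜‖ ^ 2 := by
        rw [Finset.mul_sum]
        gcongr with j hj
        rw [b.inner_apply_sub_smul heig, norm_mul, mul_pow]
        gcongr
        exact hs j hj
    _ ≤ ∑ j, ‖⟪b j, A w - c • w⟫_𝕜‖ ^ 2 :=
        Finset.sum_le_sum_of_subset_of_nonneg (Finset.subset_univ s) fun _ _ _ => by positivity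
    _ = ‖A w - c • w‖ ^ 2 := b.sum_sq_norm_inner_right _

theorem OrthonormalBasis.exists_norm_sub_mul_le [Nonempty ι] (heig : ∀ i, A (b i) = μ i • b i)
    (c : 𝕜) (w : E) : ∃ i, ‖c - μ i‖ * ‖w‖ ≤ ‖A w - c • w‖ := by
  obtain ⟨i, -, hmin⟩ := Finset.univ.exists_min_image (fun i => ‖c - μ i‖) Finset.univ_nonempty
  refine ⟨i, (pow_le_pow_iff_left₀ (by positivity) (norm_nonneg _) two_ne_zero).mp ?_⟩
  have := b.sq_mul_sum_sq_norm_inner_le heig c w (norm_nonneg _) Finset.univ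
    fun j hj => (hmin j hj).trans_eq (norm_sub_rev _ _)
  rwa [b.sum_sq_norm_inner_right, ← mul_pow] at this

theorem OrthonormalBasis.sq_mul_sub_sq_norm_inner_le (heig : ∀ i, A (b i) = μ i • b i) (c : 𝕜)
    (w : E) {r : ℝ} (hr : 0 ≤ r) (i : ι) (hfar : ∀ j ≠ i, r ≤ ‖μ j - c‖) :
    r ^ 2 * (‖w‖ ^ 2 - ‖⟪b i, w⟫_𝕜‖ ^ 2) ≤ ‖A w - c • w‖ ^ 2 := by
  classical
  have := b.sq_mul_sum_sq_norm_inner_le heig c w hr (Finset.univ.erase i)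
    fun j hj => hfar j (Finset.ne_of_mem_erase hj)
  rwa [Finset.sum_erase_eq_sub (Finset.mem_univ i), b.sum_sq_norm_inner_right] at this

end Eigenbasis

theorem two_sub_two_mul_le_div_thirty_sq {δ B p : ℝ} (hδ : 0 < δ) (hδ1 : δ ≤ 1) (hB0 : 0 ≤ B)
    (hB : B ≤ δ ^ 2 / 100) (hp0 : 0 ≤ p) (hp1 : p ≤ 1)
    (hmass : (δ - B) ^ 2 * (1 - p ^ 2) ≤ B ^ 2) :
    2 - 2 * p ≤ (δ / 30) ^ 2 := by
  have hδB : 99 * δ / 100 ≤ δ - B := by nlinarith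
  have hp : (99 * δ / 100) ^ 2 * (1 - p ^ 2) ≤ (δ ^ 2 / 100) ^ 2 :=
    calc (99 * δ / 100) ^ 2 * (1 - p ^ 2) ≤ (δ - B) ^ 2 * (1 - p ^ 2) := by
          gcongr
          nlinarith
      _ ≤ B ^ 2 := hmass
      _ ≤ (δ ^ 2 / 100) ^ 2 := by gcongr
  have hp' : 9801 * (1 - p ^ 2) ≤ δ ^ 2 := le_of_mul_le_mul_left (by nlinarith) (pow_pos hδ 2)
  nlinarith [mul_nonneg hp0 (sub_nonneg.mpr hp1)]

theorem approx_eigval_eigvec_general (n : ℕ) (hn : 0 < n)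
    (A : EuclideanSpace ℂ (Fin n) →L[ℂ] EuclideanSpace ℂ (Fin n))
    (b : OrthonormalBasis (Fin n) ℂ (EuclideanSpace ℂ (Fin n)))
    (lam : Fin n → ℝ)
    (heig : ∀ i, A (b i) = (lam i : ℂ) • b i)
    (δ : ℝ) (hδpos : 0 < δ)
    (hsep : ∀ i j : Fin n, (i : ℕ) + 1 = j → lam i - lam j ≥ δ)
    (hpos : ∀ i, 0 ≤ lam i) (htop : lam ⟨0, hn⟩ ≤ 1 - δ)
    (w : EuclideanSpace ℂ (Fin n)) (hw : ‖w‖ = 1)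
    (c : ℂ)
    (B : ℝ) (hB : B ≤ δ ^ 2 / 100)
    (hres : ‖A w - c • w‖ ≤ B) :
    ∃ i : Fin n, ‖c - (lam i : ℂ)‖ ≤ δ / 10 ∧
      ∃ v : EuclideanSpace ℂ (Fin n), ‖v‖ = 1 ∧ A v = (lam i : ℂ) • v ∧
        ‖v - w‖ ≤ δ / 30 := by
  have hδ1 : δ ≤ 1 := by linarith [hpos ⟨0, hn⟩]
  have hB0 : 0 ≤ B := (norm_nonneg _).trans hres
  have : Nonempty (Fin n) := ⟨⟨0, hn⟩⟩
  obtain ⟨i, hi⟩ := b.exists_norm_sub_mul_le (A := A.toLinearMap) heig c w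
  have hci : ‖c - lam i‖ ≤ B := by
    rw [hw, mul_one] at hi
    exact hi.trans hres
  have hfar : ∀ j ≠ i, δ - B ≤ ‖(lam j : ℂ) - c‖ := by
    intro j hj
    have hgap := Fin.le_abs_sub_of_ne_of_forall_succ_le_sub hδpos.le hsep hj
    have htri : ‖(lam j : ℂ) - lam i‖ ≤ ‖(lam j : ℂ) - c‖ + ‖c - lam i‖ :=
      norm_sub_le_norm_sub_add_norm_sub _ _ _
    rw [← Complex.ofReal_sub, Complex.norm_real, Real.norm_eq_abs] at htri
    linarith
  have hmass := (b.sq_mul_sub_sq_norm_inner_le (A := A.toLinearMap) heig c w (by nlinarith) i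
    hfar).trans (pow_le_pow_left₀ (norm_nonneg _) hres 2)
  rw [hw, one_pow] at hmass
  obtain ⟨z, hz, hdist⟩ := exists_norm_eq_one_norm_smul_sub_sq (𝕜 := ℂ) (b i) w
  rw [b.norm_eq_one, hw, one_pow, one_add_one_eq_two] at hdist
  refine ⟨i, by nlinarith, z • b i, by simp [norm_smul, hz], by rw [map_smul, heig, smul_comm], ?_⟩
  have hp1 : ‖⟪b i, w⟫_ℂ‖ ≤ 1 := by simpa [hw] using norm_inner_le_norm (𝕜 := ℂ) (b i) w
  refine (pow_le_pow_iff_left₀ (norm_nonneg _) (by positivity) two_ne_zero).mp ?_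
  rw [hdist]
  exact two_sub_two_mul_le_div_thirty_sq hδpos hδ1 hB0 hB (norm_nonneg _) hp1 hmass

/-- If `A` is a `δ`-separated Hermitian matrix (given by its eigendecomposition:
orthonormal eigenbasis `b`, eigenvalues `lam` strictly decreasing with gaps at least
`δ`, nonnegative, and `lam 0 ≤ 1 - δ`), `w` is a unit vector and `|c| ≤ 1` with
`‖Aw - cw‖ ≤ B ≤ δ²/100`, then some eigenvalue `lam i` satisfies `|c - lam i| ≤ δ/10`
and some unit eigenvector `v` for `lam i` satisfies `‖v - w‖ ≤ δ/30`. -/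
theorem approx_eigval_eigvec (n : ℕ) (hn : 0 < n)
    (A : EuclideanSpace ℂ (Fin n) →L[ℂ] EuclideanSpace ℂ (Fin n))
    (hA : IsSelfAdjoint A)
    (b : OrthonormalBasis (Fin n) ℂ (EuclideanSpace ℂ (Fin n)))
    (lam : Fin n → ℝ)
    (heig : ∀ i, A (b i) = (lam i : ℂ) • b i)
    (δ : ℝ) (hδpos : 0 < δ)
    (hsep : ∀ i j : Fin n, (i : ℕ) + 1 = j → lam i - lam j ≥ δ)
    (hpos : ∀ i, 0 ≤ lam i) (htop : lam ⟨0, hn⟩ ≤ 1 - δ)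
    (w : EuclideanSpace ℂ (Fin n)) (hw : ‖w‖ = 1)
    (c : ℂ) (hc : ‖c‖ ≤ 1)
    (B : ℝ) (hB : B ≤ δ ^ 2 / 100)
    (hres : ‖A w - c • w‖ ≤ B) :
    ∃ i : Fin n, ‖c - (lam i : ℂ)‖ ≤ δ / 10 ∧
      ∃ v : EuclideanSpace ℂ (Fin n), ‖v‖ = 1 ∧ A v = (lam i : ℂ) • v ∧
        ‖v - w‖ ≤ δ / 30 :=
  approx_eigval_eigvec_general n hn A b lam heig δ hδpos hsep hpos htop w hw c B hB hres
end
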